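/- Let G be a finitely generated group, p a prime, k a nonnegative integer, and x ∈ G. Then RG_p(G/⟨⟨x^{p^k}⟩⟩) ≥ RG_p(G) - 1/p^k, where ⟨⟨x^{p^k}⟩⟩ is the normal closure of x^{p^k} in G. -/

import Mathlib

/-- `dGen G` is the minimal number of generators of the group `G`. -/
noncomputable def dGen (G : Type*) [Group G] : ℕ :=
  sInf {n : ℕ | ∃ S : Finset G, S.card = n ∧ Subgroup.closure (S : Set G) = ⊤}

/-- The rank gradient of `G`. -/
noncomputable def rankGradient (G : Type*) [Group G] : ℝ :=
  sInf {r : ℝ | ∃ H : Subgroup G, H.index ≠ 0 ∧ r = ((dGen H : ℝ) - 1) / (H.index : ℝ)}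

open scoped commutatorElement

/-- The subgroup `[G,G]G^p` of `G` (as a normal closure of its generators). -/
def pCommPow (p : ℕ) (G : Type*) [Group G] : Subgroup G :=
  Subgroup.normalClosure ({x | ∃ a b : G, x = ⁅a, b⁆} ∪ {x | ∃ g : G, x = g ^ p})

instance pCommPow_normal (p : ℕ) (G : Type*) [Group G] : (pCommPow p G).Normal :=
  Subgroup.normalClosure_normal

/-- `d_p(G) = d(G/([G,G]G^p))`. -/
noncomputable def dp (p : ℕ) (G : Type*) [Group G] : ℕ :=
  dGen (G ⧸ pCommPow p G)

/-- The `p`-gradient of `G`. -/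
noncomputable def pGradient (p : ℕ) (G : Type*) [Group G] : ℝ :=
  sInf {r : ℝ | ∃ H : Subgroup G, H.Normal ∧ (∃ k : ℕ, H.index = p ^ k) ∧
    r = ((dp p H : ℝ) - 1) / (H.index : ℝ)}

/-- The `p`-residual: intersection of all normal subgroups of `p`-power index. -/
def pResidual (p : ℕ) (G : Type*) [Group G] : Subgroup G :=
  ⨅ H ∈ {H : Subgroup G | H.Normal ∧ ∃ k : ℕ, H.index = p ^ k}, H

instance pResidual_normal (p : ℕ) (G : Type*) [Group G] : (pResidual p G).Normal := by
  constructor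
  intro n hn g
  simp only [pResidual, Subgroup.mem_iInf] at hn ⊢
  intro H hH
  exact hH.1.conj_mem n (hn H hH) g


/-!
Let `K` be a normal subgroup of index `p ^ n` in `G ⧸ ⟪x ^ p ^ k⟫`. Its preimage `H` in `G` has
the same index and `K ≅ H ⧸ ⟪x ^ p ^ k⟫`, so it suffices to show
`d_p(H) ≤ d_p(H ⧸ ⟪x ^ p ^ k⟫) + p ^ n / p ^ k`. In `V = H ⧸ [H,H]H^p` the image of
`⟪x ^ p ^ k⟫` is generated by the images of the conjugates `g x^(p^k) g⁻¹`. As `H` acts trivially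
on `V` and `x` commutes with `x ^ p ^ k`, such an image depends only on the coset of `g` modulo
`H⟨x⟩`, so at most `p ^ n / ord(xH)` generators are needed. If `ord(xH) ≥ p ^ k` this is the
bound; otherwise `x ^ p ^ k` is a `p`-th power of an element of `H` and its image in `V` is
trivial.
-/

open Subgroup QuotientGroup

section Generators

variable {A B : Type*} [Group A] [Group B]

theorem dGen_eq_rank [Group.FG A] : dGen A = Group.rank A := by
  rw [dGen, Group.rank, ← Nat.sInf_def (Group.fg_iff'.mp ‹_›)]
  rfl

theorem dGen_eq_zero_of_not_fg (h : ¬Group.FG A) : dGen A = 0 := by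
  refine Nat.sInf_eq_zero.mpr (Or.inr (Set.eq_empty_of_forall_notMem ?_))
  rintro n ⟨S, -, hS⟩
  exact h (Group.fg_iff'.mpr ⟨_, S, rfl, hS⟩)

theorem dGen_congr (e : A ≃* B) : dGen A = dGen B := by
  by_cases hA : Group.FG A
  · have : Group.FG B := Group.fg_of_surjective (f := e.toMonoidHom) e.surjective
    rw [dGen_eq_rank, dGen_eq_rank, Group.rank_congr e]
  · have hB : ¬Group.FG B := fun _ ↦
      hA (Group.fg_of_surjective (f := e.symm.toMonoidHom) e.symm.surjective)
    rw [dGen_eq_zero_of_not_fg hA, dGen_eq_zero_of_not_fg hB]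

theorem dGen_le_dGen_quotient_add_ncard (W : Subgroup A) [W.Normal] {s : Set A}
    (hs : s.Finite) (hW : closure s = W) : dGen A ≤ dGen (A ⧸ W) + s.ncard := by
  by_cases hA : Group.FG A
  swap
  · simp [dGen_eq_zero_of_not_fg hA]
  classical
  obtain ⟨S, hS_card, hS⟩ := Group.rank_spec (A ⧸ W)
  set T := S.image Quotient.out ∪ hs.toFinset
  have hWT : W ≤ closure (T : Set A) := hW ▸ closure_mono (by simp [T])
  have hT_map : (closure (T : Set A)).map (mk' W) = ⊤ := by
    rw [MonoidHom.map_closure, eq_top_iff, ← hS, closure_le]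
    intro q hq
    exact subset_closure ⟨q.out, by simp_all [T], by simp⟩
  have hT : closure (T : Set A) = ⊤ := by
    rw [← sup_eq_left.mpr hWT, ← ker_mk' W, ← comap_map_eq, hT_map, comap_top]
  rw [dGen_eq_rank, dGen_eq_rank, ← hS_card, Set.ncard_eq_toFinset_card s hs]
  calc Group.rank A ≤ T.card := Group.rank_le hT
    _ ≤ (S.image Quotient.out).card + hs.toFinset.card := Finset.card_union_le _ _
    _ ≤ S.card + hs.toFinset.card := by grw [Finset.card_image_le]

end Generators

section PCommPow

variable (p : ℕ) {A B : Type*} [Group A] [Group B]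

theorem commutatorElement_mem_pCommPow (a b : A) : ⁅a, b⁆ ∈ pCommPow p A :=
  subset_normalClosure (Or.inl ⟨a, b, rfl⟩)

theorem pow_mem_pCommPow (a : A) : a ^ p ∈ pCommPow p A :=
  subset_normalClosure (Or.inr ⟨a, rfl⟩)

theorem mk_conj_pCommPow (w z : A) : (mk (w * z * w⁻¹) : A ⧸ pCommPow p A) = mk z := by
  rw [QuotientGroup.eq]
  convert commutatorElement_mem_pCommPow p w z⁻¹ using 1
  rw [commutatorElement_def]
  group

theorem map_pCommPow {f : A →* B} (hf : Function.Surjective f) :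
    (pCommPow p A).map f = pCommPow p B := by
  have : ((pCommPow p A).map f).Normal := Normal.map inferInstance f hf
  refine le_antisymm ((map_le_iff_le_comap).mpr (normalClosure_le_normal ?_))
    (normalClosure_le_normal ?_)
  · rintro _ (⟨a, b, rfl⟩ | ⟨a, rfl⟩)
    · simpa [map_commutatorElement] using commutatorElement_mem_pCommPow p (f a) (f b)
    · simpa using pow_mem_pCommPow p (f a)
  · rintro _ (⟨a, b, rfl⟩ | ⟨a, rfl⟩)
    · obtain ⟨a, rfl⟩ := hf a
      obtain ⟨b, rfl⟩ := hf b
      exact ⟨_, commutatorElement_mem_pCommPow p a b, map_commutatorElement f a b⟩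
    · obtain ⟨a, rfl⟩ := hf a
      exact ⟨_, pow_mem_pCommPow p a, map_pow f a p⟩

theorem dp_congr (e : A ≃* B) : dp p A = dp p B :=
  dGen_congr (QuotientGroup.congr _ _ e (map_pCommPow p e.surjective))

theorem dp_quotient (M : Subgroup A) [M.Normal] :
    dp p (A ⧸ M) = dGen ((A ⧸ pCommPow p A) ⧸ M.map (mk' (pCommPow p A))) := by
  have hM : (pCommPow p A ⊔ M).map (mk' M) = pCommPow p (A ⧸ M) := by
    rw [Subgroup.map_sup, map_mk'_self, sup_bot_eq, map_pCommPow p (mk'_surjective M)]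
  have hΦ : (pCommPow p A ⊔ M).map (mk' (pCommPow p A)) = M.map (mk' (pCommPow p A)) := by
    rw [Subgroup.map_sup, map_mk'_self, bot_sup_eq]
  calc dp p (A ⧸ M) = dGen (A ⧸ (pCommPow p A ⊔ M)) :=
        dGen_congr ((quotientMulEquivOfEq hM.symm).trans
          (quotientQuotientEquivQuotient M _ le_sup_right))
    _ = _ := dGen_congr ((quotientQuotientEquivQuotient (pCommPow p A) _ le_sup_left).symm.trans
          (quotientMulEquivOfEq hΦ))

end PCommPow

theorem Subgroup.subgroupOf_closure_of_subset {G : Type*} [Group G] {s : Set G}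
    {H : Subgroup G} (hs : s ⊆ H) : (closure s).subgroupOf H = closure (H.subtype ⁻¹' s) := by
  apply map_injective H.subtype_injective
  rw [subgroupOf_map_subtype, inf_eq_left.mpr ((closure_le H).mpr hs), MonoidHom.map_closure,
    Set.image_preimage_eq_of_subset (by simpa using hs)]

noncomputable def QuotientGroup.comapMk'QuotientEquiv {G : Type*} [Group G] (N : Subgroup G)
    [N.Normal] (K : Subgroup (G ⧸ N)) :
    K.comap (mk' N) ⧸ N.subgroupOf (K.comap (mk' N)) ≃* K :=
  let f := (mk' N).comp (K.comap (mk' N)).subtype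
  have hker : N.subgroupOf (K.comap (mk' N)) = f.ker := by
    ext h
    simp [f, mem_subgroupOf]
  have hrange : f.range = K := by
    rw [MonoidHom.range_comp, range_subtype, map_comap_eq_self_of_surjective (mk'_surjective N)]
  (quotientMulEquivOfEq hker).trans
    ((quotientKerEquivRange f).trans (MulEquiv.subgroupCongr hrange))

section Conjugates

variable {G : Type*} [Group G] (p : ℕ) (H : Subgroup G) [H.Normal] {y : G} (hy : y ∈ H)

def conjImage (g : G) : H ⧸ pCommPow p H :=
  ((⟨g * y * g⁻¹, Normal.conj_mem ‹_› y hy g⟩ : H) : H ⧸ pCommPow p H)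

theorem closure_range_conjImage :
    closure (Set.range (conjImage p H hy)) =
      ((normalClosure {y}).subgroupOf H).map (mk' (pCommPow p H)) := by
  have hconj : Group.conjugatesOfSet {y} ⊆ H := fun z hz ↦ by
    obtain ⟨g, rfl⟩ := isConj_iff.mp (by simpa [Group.mem_conjugatesOfSet_iff] using hz)
    exact Normal.conj_mem ‹_› y hy g
  rw [normalClosure, subgroupOf_closure_of_subset hconj, MonoidHom.map_closure]
  congr 1
  ext v
  simp [conjImage, Group.mem_conjugatesOfSet_iff, isConj_iff, Normal.conj_mem ‹H.Normal› y hy]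

variable {p H hy}

theorem conjImage_mul_of_mem (g : G) {h : G} (hh : h ∈ H) :
    conjImage p H hy (g * h) = conjImage p H hy g := by
  have hw : g * h * g⁻¹ ∈ H := Normal.conj_mem ‹_› h hh g
  calc conjImage p H hy (g * h)
      = (((⟨_, hw⟩ * ⟨g * y * g⁻¹, Normal.conj_mem ‹_› y hy g⟩ * (⟨_, hw⟩ : H)⁻¹ : H)) :
          H ⧸ pCommPow p H) :=
        congrArg QuotientGroup.mk (Subtype.ext (by simp; group))
    _ = conjImage p H hy g := mk_conj_pCommPow p _ _

theorem conjImage_mul_of_commute (g : G) {z : G} (hz : Commute z y) :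
    conjImage p H hy (g * z) = conjImage p H hy g :=
  congrArg QuotientGroup.mk (Subtype.ext (show g * z * y * (g * z)⁻¹ = g * y * g⁻¹ by
    rw [mul_assoc g z y, hz.eq]; group))

theorem conjImage_eq_one_of_eq_pow {z : G} (hz : z ∈ H) (hyz : y = z ^ p) (g : G) :
    conjImage p H hy g = 1 := by
  have hw : g * z * g⁻¹ ∈ H := Normal.conj_mem ‹_› z hz g
  calc conjImage p H hy g = (((⟨_, hw⟩ : H) ^ p : H) : H ⧸ pCommPow p H) :=
        congrArg QuotientGroup.mk (Subtype.ext (by simp [hyz, conj_pow]))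
    _ = 1 := (QuotientGroup.eq_one_iff _).mpr (pow_mem_pCommPow p _)

end Conjugates

section Counting

variable {G : Type*} [Group G] {p : ℕ} {H : Subgroup G} [H.Normal] {x y : G} {hy : y ∈ H}

theorem conjImage_mul_of_mem_comap_zpowers (hxy : Commute x y) (g : G) {l : G}
    (hl : l ∈ (zpowers (x : G ⧸ H)).comap (mk' H)) :
    conjImage p H hy (g * l) = conjImage p H hy g := by
  obtain ⟨j, hj⟩ := mem_zpowers_iff.mp hl
  have hxl : (x ^ j)⁻¹ * l ∈ H := QuotientGroup.eq.mp (by simpa using hj)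
  calc conjImage p H hy (g * l) = conjImage p H hy (g * x ^ j * ((x ^ j)⁻¹ * l)) := by group
    _ = conjImage p H hy g := by
      rw [conjImage_mul_of_mem _ hxl, conjImage_mul_of_commute _ (hxy.zpow_left j)]

theorem range_conjImage_eq (hxy : Commute x y) :
    Set.range (conjImage p H hy) =
      Set.range fun q : G ⧸ (zpowers (x : G ⧸ H)).comap (mk' H) ↦ conjImage p H hy q.out := by
  refine Set.Subset.antisymm ?_ (Set.range_subset_iff.mpr fun q ↦ ⟨q.out, rfl⟩)
  rintro _ ⟨g, rfl⟩
  obtain ⟨l, hl⟩ := QuotientGroup.mk_out_eq_mul ((zpowers (x : G ⧸ H)).comap (mk' H)) g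
  exact ⟨g, by dsimp only; rw [hl, conjImage_mul_of_mem_comap_zpowers hxy g l.2]⟩

variable [H.FiniteIndex]

instance finiteIndex_comap_mk'_zpowers : ((zpowers (x : G ⧸ H)).comap (mk' H)).FiniteIndex :=
  finiteIndex_of_le (ker_mk' H ▸ MonoidHom.ker_le_comap _ _)

theorem finite_range_conjImage (hxy : Commute x y) : (Set.range (conjImage p H hy)).Finite := by
  rw [range_conjImage_eq hxy]
  exact Set.finite_range _

theorem ncard_range_conjImage_mul_orderOf_le (hxy : Commute x y) :
    (Set.range (conjImage p H hy)).ncard * orderOf (x : G ⧸ H) ≤ H.index := by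
  set L := (zpowers (x : G ⧸ H)).comap (mk' H)
  have hL : L.index * orderOf (x : G ⧸ H) = H.index := by
    rw [index_comap_of_surjective _ (mk'_surjective H), ← Nat.card_zpowers, mul_comm,
      card_mul_index, index]
  calc (Set.range (conjImage p H hy)).ncard * orderOf (x : G ⧸ H)
      ≤ L.index * orderOf (x : G ⧸ H) := by
        gcongr
        rw [range_conjImage_eq hxy, ← Set.image_univ, index, ← Set.ncard_univ]
        exact Set.ncard_image_le
    _ = H.index := hL

end Counting

section KeyEstimate

variable {G : Type*} [Group G] {p n k : ℕ} {H : Subgroup G} [H.Normal] {x : G}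

theorem exists_pow_eq_pow_of_orderOf_lt (hp : p.Prime) (hH : H.index = p ^ n)
    (h : orderOf (x : G ⧸ H) < p ^ k) : ∃ z ∈ H, x ^ p ^ k = z ^ p := by
  have hdvd : orderOf (x : G ⧸ H) ∣ p ^ n := hH ▸ orderOf_dvd_natCard _
  obtain ⟨m, -, hm⟩ := (Nat.dvd_prime_pow hp).mp hdvd
  have hmk : m < k := (Nat.pow_lt_pow_iff_right hp.one_lt).mp (hm ▸ h)
  refine ⟨x ^ p ^ (k - 1), ?_, ?_⟩
  · rw [← QuotientGroup.eq_one_iff, QuotientGroup.mk_pow, orderOf_dvd_iff_pow_eq_one.mp]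
    exact hm ▸ pow_dvd_pow p (by omega)
  · rw [← pow_mul, ← pow_succ, Nat.sub_add_cancel (by omega)]

theorem exists_finite_closure_eq_map_normalClosure (hp : p.Prime) (hH : H.index = p ^ n)
    (hxH : x ^ p ^ k ∈ H) :
    ∃ s : Set (H ⧸ pCommPow p H), s.Finite ∧
      closure s = ((normalClosure {x ^ p ^ k}).subgroupOf H).map (mk' (pCommPow p H)) ∧
      s.ncard * p ^ k ≤ p ^ n := by
  have : H.FiniteIndex := ⟨hH ▸ pow_ne_zero n hp.ne_zero⟩
  have hxy : Commute x (x ^ p ^ k) := Commute.self_pow x _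
  rw [← closure_range_conjImage p H hxH]
  by_cases h : p ^ k ≤ orderOf (x : G ⧸ H)
  · refine ⟨_, finite_range_conjImage hxy, rfl, ?_⟩
    calc _ ≤ (Set.range (conjImage p H hxH)).ncard * orderOf (x : G ⧸ H) := by gcongr
      _ ≤ p ^ n := hH ▸ ncard_range_conjImage_mul_orderOf_le hxy
  · obtain ⟨z, hz, hxz⟩ := exists_pow_eq_pow_of_orderOf_lt hp hH (not_le.mp h)
    refine ⟨∅, Set.finite_empty, ?_, by simp⟩
    rw [Subgroup.closure_empty, eq_comm, closure_eq_bot_iff]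
    rintro _ ⟨g, rfl⟩
    exact conjImage_eq_one_of_eq_pow hz hxz g

theorem dp_le_dp_quotient_normalClosure_add (hp : p.Prime) (hH : H.index = p ^ n)
    (hxH : x ^ p ^ k ∈ H) :
    (dp p H : ℝ) ≤
      dp p (H ⧸ (normalClosure {x ^ p ^ k}).subgroupOf H) + (p : ℝ) ^ n / p ^ k := by
  obtain ⟨s, hs, hs_closure, hs_card⟩ := exists_finite_closure_eq_map_normalClosure hp hH hxH
  have hle := dGen_le_dGen_quotient_add_ncard _ hs hs_closure
  have hs_card' : (s.ncard : ℝ) ≤ (p : ℝ) ^ n / p ^ k := by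
    rw [le_div_iff₀ (by have := hp.pos; positivity)]
    exact_mod_cast hs_card
  rw [dp_quotient]
  calc (dp p H : ℝ) ≤ (dGen _ + s.ncard : ℕ) := by exact_mod_cast hle
    _ ≤ _ := by push_cast; linarith

end KeyEstimate

section Gradient

variable {G : Type*} [Group G] {p : ℕ}

theorem bddBelow_pGradient_set :
    BddBelow {r : ℝ | ∃ H : Subgroup G, H.Normal ∧ (∃ k : ℕ, H.index = p ^ k) ∧
      r = ((dp p H : ℝ) - 1) / (H.index : ℝ)} := by
  refine ⟨-1, ?_⟩
  rintro _ ⟨H, -, -, rfl⟩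
  rcases Nat.eq_zero_or_pos H.index with h | h
  · simp [h]
  · have h' : (1 : ℝ) ≤ H.index := by exact_mod_cast h
    rw [le_div_iff₀ (by positivity)]
    linarith [(dp p H).cast_nonneg (α := ℝ)]

theorem pGradient_le {H : Subgroup G} [H.Normal] {n : ℕ} (hH : H.index = p ^ n) :
    pGradient p G ≤ ((dp p H : ℝ) - 1) / H.index :=
  csInf_le bddBelow_pGradient_set ⟨H, inferInstance, ⟨n, hH⟩, rfl⟩

theorem le_pGradient {b : ℝ} (h : ∀ H : Subgroup G, H.Normal → ∀ n : ℕ, H.index = p ^ n →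
      b ≤ ((dp p H : ℝ) - 1) / H.index) :
    b ≤ pGradient p G :=
  le_csInf ⟨_, ⊤, inferInstance, ⟨0, by simp⟩, rfl⟩ fun _ ⟨H, hH, ⟨n, hn⟩, hr⟩ ↦ hr ▸ h H hH n hn

end Gradient

theorem pGradient_quotient_lower_bound_general (G : Type*) [Group G]
    (p : ℕ) (hp : p.Prime) (k : ℕ) (x : G) :
    pGradient p (G ⧸ Subgroup.normalClosure {x ^ p ^ k})
      ≥ pGradient p G - 1 / (p : ℝ) ^ k := by
  set N := normalClosure {x ^ p ^ k}
  refine le_pGradient fun K _ n hK ↦ ?_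
  set H := K.comap (mk' N)
  have hH : H.index = p ^ n := by rw [index_comap_of_surjective _ (mk'_surjective N), hK]
  have hxH : x ^ p ^ k ∈ H := by
    have hx : ((x ^ p ^ k : G) : G ⧸ N) = 1 :=
      (QuotientGroup.eq_one_iff _).mpr (subset_normalClosure rfl)
    simp [H, hx]
  have hdp : dp p K = dp p (H ⧸ N.subgroupOf H) := (dp_congr p (comapMk'QuotientEquiv N K)).symm
  have hpn : (0 : ℝ) < (p : ℝ) ^ n := by have := hp.pos; positivity
  have hkey := dp_le_dp_quotient_normalClosure_add hp hH hxH
  calc pGradient p G - 1 / (p : ℝ) ^ k ≤ ((dp p H : ℝ) - 1) / p ^ n - 1 / p ^ k := by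
        grw [pGradient_le hH, hH, Nat.cast_pow]
    _ = ((dp p H : ℝ) - 1 - p ^ n / p ^ k) / p ^ n := by field_simp
    _ ≤ ((dp p K : ℝ) - 1) / K.index := by
        rw [hK, hdp, Nat.cast_pow]
        exact div_le_div_of_nonneg_right (by linarith) hpn.le

/-- `RG_p(G/⟪x^{p^k}⟫) ≥ RG_p(G) - 1/p^k`. -/
theorem pGradient_quotient_lower_bound (G : Type*) [Group G] [Group.FG G]
    (p : ℕ) (hp : p.Prime) (k : ℕ) (x : G) :
    pGradient p (G ⧸ Subgroup.normalClosure {x ^ p ^ k})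
      ≥ pGradient p G - 1 / (p : ℝ) ^ k :=
  pGradient_quotient_lower_bound_general G p hp k x
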